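/- Root-Hadamard transform as a generalized Walsh–Hadamard transform: Let n ≥ 1, k ≥ 1, q = 2^k, f : F_2^n → Z_q, K a finite index set, r : {0,...,n-1} → K, and for s ∈ K let α_s = exp(2πi/2^{m_s}) with 1 ≤ m_s ≤ k. For s ∈ K let R_s = r^{-1}(s) and wt(x_{R_s}) = Σ_{j ∈ R_s} x_j ∈ ℕ. Define h : F_2^n → Z_q by h(x) = f(x) - Σ_{s ∈ K} 2^{k - m_s}·(wt(x_{R_s}) mod 2^{m_s}) (computed in Z_q). Then for all u ∈ F_2^n: U_h(u) = H_f(u), where U_h(u) = 2^{-n/2} Σ_x ζ_q^{h(x)} (-1)^{u·x} Π_{j=0}^{n-1} α_{r(j)}^{x_j} and H_f(u) = 2^{-n/2} Σ_x ζ_q^{f(x)} (-1)^{u·x}. -/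

import Mathlib

open Complex Finset

noncomputable section

/-- `ζ_q = exp(2πi/q)`. -/
def zetaC (q : ℕ) : ℂ := Complex.exp (2 * Real.pi * Complex.I / q)

/-- Hamming weight of a binary vector. -/
def wtv {n : ℕ} (x : Fin n → ZMod 2) : ℕ := ∑ j, (x j).val

/-- `(-1)^{u·x}` where `u·x` is the dot product over `F_2`. -/
def chr {n : ℕ} (u x : Fin n → ZMod 2) : ℂ := (-1 : ℂ) ^ (∑ j, u j * x j : ZMod 2).val

/-- `2^{-n/2}` as a complex number. -/
def nrm (n : ℕ) : ℂ := (((2 : ℝ) ^ (-(n : ℝ) / 2) : ℝ) : ℂ)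

/-- `λ(x) = Π_j α_{r(j)}^{x_j}`. -/
def lamb {n : ℕ} {K : Type*} (r : Fin n → K) (α : K → ℂ) (x : Fin n → ZMod 2) : ℂ :=
  ∏ j, α (r j) ^ (x j).val

/-- The root-Hadamard transform `U_f(u) = 2^{-n/2} Σ_x ζ_q^{f(x)} (-1)^{u·x} λ(x)`. -/
def rootH {n q : ℕ} {K : Type*} (r : Fin n → K) (α : K → ℂ)
    (f : (Fin n → ZMod 2) → ZMod q) (u : Fin n → ZMod 2) : ℂ :=
  nrm n * ∑ x, zetaC q ^ (f x).val * chr u x * lamb r α x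

/-- The generalized Walsh-Hadamard transform `H_f(u) = 2^{-n/2} Σ_x ζ_q^{f(x)} (-1)^{u·x}`. -/
def genH {n q : ℕ} (f : (Fin n → ZMod 2) → ZMod q) (u : Fin n → ZMod 2) : ℂ :=
  nrm n * ∑ x, zetaC q ^ (f x).val * chr u x

/-- `wt(x_{R_s}) = Σ_{j ∈ R_s} x_j`, the weight of `x` restricted to `R_s = r⁻¹(s)`. -/
def wtR {n : ℕ} {K : Type*} [DecidableEq K] (r : Fin n → K) (s : K) (x : Fin n → ZMod 2) : ℕ :=
  ∑ j ∈ Finset.univ.filter (fun j => r j = s), (x j).val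

/-! Writing `q = 2^k`, each `α_s = ζ_q^{2^{k-m_s}}` has order `2^{m_s}`, so
`λ(x) = ζ_q^{N(x)}` with `N(x) = Σ_s 2^{k-m_s} (wt(x_{R_s}) mod 2^{m_s})`. Hence
`ζ_q^{h(x)} λ(x) = ζ_q^{f(x) - N(x) + N(x)} = ζ_q^{f(x)}` termwise. -/

theorem zetaC_pow_self (q : ℕ) : zetaC q ^ q = 1 := by
  rcases eq_or_ne q 0 with rfl | hq
  · simp
  · exact (Complex.isPrimitiveRoot_exp q hq).pow_eq_one

theorem zetaC_pow_eq_pow_of_modEq {q a b : ℕ} (hab : a ≡ b [MOD q]) :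
    zetaC q ^ a = zetaC q ^ b :=
  pow_eq_pow_of_modEq hab (zetaC_pow_self q)

theorem zetaC_eq_zetaC_mul_pow {q e : ℕ} (he : e ≠ 0) : zetaC q = zetaC (q * e) ^ e := by
  rw [zetaC, zetaC, ← Complex.exp_nat_mul]
  congr 1
  have he' : (e : ℂ) ≠ 0 := Nat.cast_ne_zero.mpr he
  push_cast
  field_simp

theorem zetaC_two_pow_pow {m k : ℕ} (hmk : m ≤ k) (w : ℕ) :
    zetaC (2 ^ m) ^ w = zetaC (2 ^ k) ^ (2 ^ (k - m) * (w % 2 ^ m)) := by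
  have hk : 2 ^ k = 2 ^ m * 2 ^ (k - m) := by rw [← pow_add, Nat.add_sub_cancel' hmk]
  rw [zetaC_eq_zetaC_mul_pow (pow_ne_zero (k - m) two_ne_zero), ← hk, ← pow_mul]
  apply zetaC_pow_eq_pow_of_modEq
  rw [hk, mul_comm (2 ^ m)]
  exact (Nat.mod_modEq w (2 ^ m)).symm.mul_left' _

theorem zetaC_pow_val_sub_mul {q : ℕ} [NeZero q] (a : ZMod q) (N : ℕ) :
    zetaC q ^ (a - N).val * zetaC q ^ N = zetaC q ^ a.val := by
  rw [← pow_add]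
  apply zetaC_pow_eq_pow_of_modEq
  rw [← ZMod.natCast_eq_natCast_iff]
  push_cast
  simp only [ZMod.natCast_val, ZMod.cast_id', id, sub_add_cancel]

theorem lamb_eq_prod_pow_wtR {n : ℕ} {K : Type*} [Fintype K] [DecidableEq K] (r : Fin n → K)
    (α : K → ℂ) (x : Fin n → ZMod 2) : lamb r α x = ∏ s, α s ^ wtR r s x := by
  rw [lamb, ← Finset.prod_fiberwise_of_maps_to (g := r) (t := Finset.univ)
    (fun j _ => Finset.mem_univ (r j))]
  refine Finset.prod_congr rfl fun s _ => ?_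
  rw [wtR, ← Finset.prod_pow_eq_pow_sum]
  exact Finset.prod_congr rfl fun j hj => by rw [(Finset.mem_filter.mp hj).2]

theorem lamb_zetaC_two_pow {n k : ℕ} {K : Type*} [Fintype K] [DecidableEq K] (r : Fin n → K)
    {m : K → ℕ} (hm : ∀ s, m s ≤ k) (x : Fin n → ZMod 2) :
    lamb r (fun s => zetaC (2 ^ m s)) x =
      zetaC (2 ^ k) ^ ∑ s, 2 ^ (k - m s) * (wtR r s x % 2 ^ m s) := by
  rw [lamb_eq_prod_pow_wtR, ← Finset.prod_pow_eq_pow_sum]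
  exact Finset.prod_congr rfl fun s _ => zetaC_two_pow_pow (hm s) _

theorem rootH_eq_genH_general {n k : ℕ}
    {K : Type*} [Fintype K] [DecidableEq K] (r : Fin n → K)
    (m : K → ℕ) (hm : ∀ s, 1 ≤ m s ∧ m s ≤ k)
    (f h : (Fin n → ZMod 2) → ZMod (2 ^ k))
    (hh : ∀ x, h x = f x -
      ((∑ s : K, 2 ^ (k - m s) * (wtR r s x % 2 ^ m s) : ℕ) : ZMod (2 ^ k)))
    (u : Fin n → ZMod 2) :
    rootH r (fun s => zetaC (2 ^ m s)) h u = genH f u := by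
  rw [rootH, genH]
  congr 1
  refine Finset.sum_congr rfl fun x _ => ?_
  rw [lamb_zetaC_two_pow r (fun s => (hm s).2), hh, mul_right_comm, zetaC_pow_val_sub_mul]

/-- the root-Hadamard transform as a generalized Walsh-Hadamard
transform, via `h(x) = f(x) - Σ_{s ∈ K} 2^{k-m_s} (wt(x_{R_s}) mod 2^{m_s})`. -/
theorem rootH_eq_genH {n k : ℕ} (hn : 1 ≤ n) (hk : 1 ≤ k)
    {K : Type*} [Fintype K] [DecidableEq K] (r : Fin n → K)
    (m : K → ℕ) (hm : ∀ s, 1 ≤ m s ∧ m s ≤ k)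
    (f h : (Fin n → ZMod 2) → ZMod (2 ^ k))
    (hh : ∀ x, h x = f x -
      ((∑ s : K, 2 ^ (k - m s) * (wtR r s x % 2 ^ m s) : ℕ) : ZMod (2 ^ k)))
    (u : Fin n → ZMod 2) :
    rootH r (fun s => zetaC (2 ^ m s)) h u = genH f u :=
  rootH_eq_genH_general r m hm f h hh u

end
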